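/- Let K be a field, L an algebraic field extension of K, H a K-bialgebra, and suppose L is a left H-module algebra via α. If I ⊆ H is a left ideal two-sided coideal, then the fixed space L^I := {x ∈ L | α(h)(x) = 0 for all h ∈ I} contains the image of K, is closed under addition and multiplication, and contains the inverse of each of its nonzero elements; hence L^I is (the underlying set of) an intermediate field of L/K. -/

import Mathlib

open TensorProduct

section Defs

variable (K L H : Type) [Field K] [Field L] [Algebra K L] [Ring H] [Bialgebra K H]

/-- `L` is a left `H`-module algebra via `α`. -/
def IsModuleAlgebra (α : H →ₐ[K] Module.End K L) : Prop :=
  (∀ h : H, α h 1 = Coalgebra.counit (R := K) h • (1 : L)) ∧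
  ∀ h : H,
    (α h : L →ₗ[K] L) ∘ₗ LinearMap.mul' K L =
      LinearMap.mul' K L ∘ₗ
        TensorProduct.homTensorHomMap (RingHom.id K) L L L L
          (TensorProduct.map (α.toLinearMap : H →ₗ[K] (L →ₗ[K] L))
            (α.toLinearMap : H →ₗ[K] (L →ₗ[K] L)) (Coalgebra.comul (R := K) h))

noncomputable def lsmulLift (V M : Type) [AddCommGroup V] [Module K V] [AddCommGroup M]
    [Module K M] [Module L M] [IsScalarTower K L M] [SMulCommClass K L M]
    (φ : V →ₗ[K] M) : L ⊗[K] V →ₗ[K] M :=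
  TensorProduct.lift
    (LinearMap.mk₂ K (fun (x : L) (v : V) => x • φ v)
      (fun x x' v => add_smul x x' (φ v))
      (fun c x v => smul_assoc c x (φ v))
      (fun x v v' => by rw [map_add, smul_add])
      (fun c x v => by rw [map_smul, smul_comm]))

/-- The canonical (Galois) map `L ⊗[K] H →ₗ[K] End_K(L)`, `x ⊗ h ↦ (y ↦ x * α h y)`. -/
noncomputable def canMap (α : H →ₐ[K] Module.End K L) : L ⊗[K] H →ₗ[K] (L →ₗ[K] L) :=
  lsmulLift K L H (L →ₗ[K] L) (α.toLinearMap : H →ₗ[K] (L →ₗ[K] L))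

/-- The annihilator `J(L0)` of an intermediate field. -/
def Jann (α : H →ₐ[K] Module.End K L) (L0 : IntermediateField K L) : Submodule K H where
  carrier := {h : H | ∀ x ∈ L0, α h x = 0}
  add_mem' := by
    intro a b ha hb x hx
    simp [map_add, LinearMap.add_apply, ha x hx, hb x hx]
  zero_mem' := by intro x hx; simp
  smul_mem' := by
    intro c a ha x hx
    simp [map_smul, LinearMap.smul_apply, ha x hx]

/-- The map `H →ₗ[K] Hom_K(L0, L)`, `h ↦ (α h)|_{L0}`. -/
def resMap (α : H →ₐ[K] Module.End K L) (L0 : IntermediateField K L) :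
    H →ₗ[K] (↥L0 →ₗ[K] L) where
  toFun h := (α h : L →ₗ[K] L) ∘ₗ L0.val.toLinearMap
  map_add' h h' := by ext x; simp
  map_smul' c h := by ext x; simp

lemma Jann_le_ker (α : H →ₐ[K] Module.End K L) (L0 : IntermediateField K L) :
    Jann K L H α L0 ≤ LinearMap.ker (resMap K L H α L0) := by
  intro h hh
  rw [LinearMap.mem_ker]
  ext x
  exact hh x x.2

/-- The induced canonical map `L ⊗[K] (H / J(L0)) →ₗ[K] Hom_K(L0, L)`. -/
noncomputable def can0 (α : H →ₐ[K] Module.End K L) (L0 : IntermediateField K L) :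
    L ⊗[K] (H ⧸ Jann K L H α L0) →ₗ[K] (↥L0 →ₗ[K] L) :=
  lsmulLift K L (H ⧸ Jann K L H α L0) (↥L0 →ₗ[K] L)
    ((Jann K L H α L0).liftQ (resMap K L H α L0) (Jann_le_ker K L H α L0))

/-- `L0` is an `H`-subextension: the induced canonical map is injective. -/
def IsHSubextension (α : H →ₐ[K] Module.End K L) (L0 : IntermediateField K L) : Prop :=
  Function.Injective (can0 K L H α L0)

end Defs

section Coideal

variable (K H : Type) [Field K] [Ring H] [Bialgebra K H]

/-- `I` is a two-sided coideal: `ε(I) = 0` and `Δ(I) ⊆ H ⊗ I + I ⊗ H`. -/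
def IsTwoSidedCoideal (I : Submodule K H) : Prop :=
  (∀ i ∈ I, Coalgebra.counit (R := K) i = 0) ∧
  ∀ i ∈ I, Coalgebra.comul (R := K) i ∈
    LinearMap.range (TensorProduct.map (LinearMap.id : H →ₗ[K] H) I.subtype) ⊔
      LinearMap.range (TensorProduct.map I.subtype (LinearMap.id : H →ₗ[K] H))

/-- `I` is a left ideal of the algebra `H`. -/
def IsLeftIdeal (I : Submodule K H) : Prop :=
  ∀ h : H, ∀ i ∈ I, h * i ∈ I

end Coideal

section Statement

variable (K L H : Type) [Field K] [Field L] [Algebra K L] [Ring H] [Bialgebra K H]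

/-- For an algebraic `H`-module algebra field extension `L/K` and a left ideal two-sided
coideal `I ⊆ H`, the fixed space `L^I = {x | α h x = 0 ∀ h ∈ I}` contains the image of `K`,
is closed under addition, multiplication and inverses of nonzero elements; hence it is the
underlying set of an intermediate field of `L/K`. -/
theorem fixedSpace_isIntermediateField [Algebra.IsAlgebraic K L]
    (α : H →ₐ[K] Module.End K L) (hMA : IsModuleAlgebra K L H α)
    (I : Submodule K H) (hIl : IsLeftIdeal K H I) (hIc : IsTwoSidedCoideal K H I) :
    Set.range (algebraMap K L) ⊆ {x : L | ∀ h ∈ I, α h x = 0} ∧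
    (∀ x ∈ {x : L | ∀ h ∈ I, α h x = 0}, ∀ y ∈ {x : L | ∀ h ∈ I, α h x = 0},
      x + y ∈ {x : L | ∀ h ∈ I, α h x = 0}) ∧
    (∀ x ∈ {x : L | ∀ h ∈ I, α h x = 0}, ∀ y ∈ {x : L | ∀ h ∈ I, α h x = 0},
      x * y ∈ {x : L | ∀ h ∈ I, α h x = 0}) ∧
    (∀ x ∈ {x : L | ∀ h ∈ I, α h x = 0}, x ≠ 0 → x⁻¹ ∈ {x : L | ∀ h ∈ I, α h x = 0}) ∧
    ∃ L0 : IntermediateField K L, (L0 : Set L) = {x : L | ∀ h ∈ I, α h x = 0} := by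
  set S : Set L := {x : L | ∀ h ∈ I, α h x = 0} with hS
  have h1 : (1:L) ∈ S := by
    intro h hh
    rw [hMA.1 h, hIc.1 h hh, zero_smul]
  have hK : Set.range (algebraMap K L) ⊆ S := by
    rintro _ ⟨c, rfl⟩ h hh
    rw [Algebra.algebraMap_eq_smul_one, map_smul, h1 h hh, smul_zero]
  have hadd : ∀ x ∈ S, ∀ y ∈ S, x + y ∈ S := by
    intro x hx y hy h hh
    rw [map_add, hx h hh, hy h hh, add_zero]
  have hmul : ∀ x ∈ S, ∀ y ∈ S, x * y ∈ S := by
    intro x hx y hy h hh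
    have key := congrFun (congrArg DFunLike.coe (hMA.2 h)) (x ⊗ₜ[K] y)
    simp only [LinearMap.comp_apply, LinearMap.mul'_apply] at key
    rw [key]
    set G : H ⊗[K] H →ₗ[K] L :=
      (LinearMap.mul' K L) ∘ₗ (LinearMap.applyₗ (x ⊗ₜ[K] y)) ∘ₗ
        (TensorProduct.homTensorHomMap (RingHom.id K) L L L L) ∘ₗ
        (TensorProduct.map (α.toLinearMap : H →ₗ[K] (L →ₗ[K] L))
          (α.toLinearMap : H →ₗ[K] (L →ₗ[K] L))) with hG
    show G (Coalgebra.comul (R := K) h) = 0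
    obtain ⟨u, hu, v, hv, huv⟩ := Submodule.mem_sup.mp (hIc.2 h hh)
    obtain ⟨a, rfl⟩ := hu
    obtain ⟨b, rfl⟩ := hv
    rw [← huv, map_add]
    have ha : ∀ a : H ⊗[K] ↥I,
        G (TensorProduct.map (LinearMap.id : H →ₗ[K] H) I.subtype a) = 0 := by
      intro a
      induction a using TensorProduct.induction_on with
      | zero => simp
      | tmul p i =>
        simp [hG, hy (i : H) i.2]
      | add s t hs ht => rw [map_add, map_add, hs, ht, add_zero]
    have hb : ∀ b : ↥I ⊗[K] H,
        G (TensorProduct.map I.subtype (LinearMap.id : H →ₗ[K] H) b) = 0 := by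
      intro b
      induction b using TensorProduct.induction_on with
      | zero => simp
      | tmul i p =>
        simp [hG, hx (i : H) i.2]
      | add s t hs ht => rw [map_add, map_add, hs, ht, add_zero]
    rw [ha a, hb b, add_zero]
  let S' : Subalgebra K L :=
    { carrier := S
      mul_mem' := fun {a b} ha hb => hmul a ha b hb
      add_mem' := fun {a b} ha hb => hadd a ha b hb
      algebraMap_mem' := fun c => hK ⟨c, rfl⟩ }
  have hinv : ∀ x ∈ S', x⁻¹ ∈ S' := fun x hx =>
    S'.inv_mem_of_algebraic (x := ⟨x, hx⟩)
      (Algebra.IsAlgebraic.isAlgebraic ((⟨x, hx⟩ : S') : L))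
  exact ⟨hK, hadd, hmul, fun x hx _ => hinv x hx,
    ⟨S'.toIntermediateField hinv, rfl⟩⟩

end Statement
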